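/- Let u ∈ ℝⁿ with ‖u‖₂ = 1 and let p ∈ (0,1). For every measurable h : ℝⁿ → [0,1] satisfying E_{s ~ N(0,I_n)}[h(s)] = p, one has E_{s ~ N(0,I_n)}[h(s) · uᵀs] ≤ (1/√(2π)) · exp(−(Φ⁻¹(p))²/2). Moreover, equality is attained by the indicator function h*(s) = 1{uᵀs ≥ −Φ⁻¹(p)}, which satisfies the constraint E_{s ~ N(0,I_n)}[h*(s)] = p. -/

import Mathlib

/-!
Let `μ` be the standard Gaussian measure on `ℝⁿ`, `X s = uᵀs` and `a = Φ⁻¹(p)`. For a unit vector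
`u` the law of `X` under `μ` is `N(0, 1)`, so `μ{X ≥ -a} = Φ(a) = p` and
`E[1{X ≥ -a} X] = ∫_{-a}^∞ x φ(x) dx = φ(a)`. The bound is the bathtub principle: for `0 ≤ h ≤ 1`
one has `(1{X ≥ c} - h)(X - c) ≥ 0` pointwise, and after integrating the `c`-terms cancel because
`h` and the indicator have the same mass.
-/

open MeasureTheory Matrix

/-- Density of the standard Gaussian `N(0, I_n)` on ℝⁿ (w.r.t. Lebesgue measure). -/
noncomputable def stdGaussDensity (n : ℕ) (s : Fin n → ℝ) : ℝ :=
  (Real.sqrt ((2 * Real.pi) ^ n))⁻¹ * Real.exp (-(∑ i, s i ^ 2) / 2)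

/-- Standard Gaussian cumulative distribution function Φ on ℝ. -/
noncomputable def stdGaussianCDF (x : ℝ) : ℝ :=
  (ProbabilityTheory.gaussianReal 0 1 (Set.Iic x)).toReal

open ProbabilityTheory Set

lemma gaussianPDFReal_zero_one (x : ℝ) :
    gaussianPDFReal 0 1 x = (Real.sqrt (2 * Real.pi))⁻¹ * Real.exp (-x ^ 2 / 2) := by
  simp [gaussianPDFReal]

lemma stdGaussDensity_eq_prod {n : ℕ} (s : Fin n → ℝ) :
    stdGaussDensity n s = ∏ i, gaussianPDFReal 0 1 (s i) := by
  have hsqrt : Real.sqrt ((2 * Real.pi) ^ n) = Real.sqrt (2 * Real.pi) ^ n := by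
    rw [Real.sqrt_eq_iff_eq_sq (by positivity) (by positivity), ← pow_mul, mul_comm n 2, pow_mul,
      Real.sq_sqrt (by positivity)]
  simp only [gaussianPDFReal_zero_one, stdGaussDensity, Finset.prod_mul_distrib,
    Finset.prod_const, Finset.card_univ, Fintype.card_fin, ← Real.exp_sum, Finset.sum_div,
    Finset.sum_neg_distrib, neg_div, hsqrt, inv_pow]

lemma pi_gaussianReal_eq_withDensity (ι : Type*) [Fintype ι] :
    Measure.pi (fun _ : ι ↦ gaussianReal 0 1) =
      volume.withDensity (fun x ↦ ENNReal.ofReal (∏ i, gaussianPDFReal 0 1 (x i))) := by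
  refine Measure.pi_eq fun s hs ↦ ?_
  have hprod : (Set.pi univ s).indicator (fun x ↦ ∏ i, gaussianPDFReal 0 1 (x i))
      = fun x ↦ ∏ i, (s i).indicator (gaussianPDFReal 0 1) (x i) := by
    ext x
    classical
    simp [Set.indicator_apply, Finset.prod_ite_zero]
  rw [withDensity_apply _ (MeasurableSet.univ_pi hs), ← ofReal_integral_eq_lintegral_ofReal,
    ← integral_indicator (MeasurableSet.univ_pi hs), hprod, volume_pi,
    integral_fintype_prod_eq_prod (f := fun i ↦ (s i).indicator (gaussianPDFReal 0 1)),
    ENNReal.ofReal_prod_of_nonneg]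
  · refine Finset.prod_congr rfl fun i _ ↦ ?_
    rw [gaussianReal_apply_eq_integral 0 one_ne_zero, integral_indicator (hs i)]
  · exact fun i _ ↦ integral_nonneg ((s i).indicator_nonneg fun x _ ↦ gaussianPDFReal_nonneg 0 1 x)
  · rw [volume_pi]
    exact (Integrable.fintype_prod fun _ ↦ integrable_gaussianPDFReal 0 1).restrict
  · exact ae_of_all _ fun x ↦ Finset.prod_nonneg fun i _ ↦ gaussianPDFReal_nonneg 0 1 (x i)

lemma integral_mul_stdGaussDensity_eq_integral_pi (n : ℕ) (g : (Fin n → ℝ) → ℝ) :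
    ∫ s, g s * stdGaussDensity n s = ∫ s, g s ∂Measure.pi (fun _ ↦ gaussianReal 0 1) := by
  rw [pi_gaussianReal_eq_withDensity, integral_withDensity_eq_integral_toReal_smul (by fun_prop)
    (ae_of_all _ fun _ ↦ ENNReal.ofReal_lt_top)]
  congr 1 with s
  rw [ENNReal.toReal_ofReal (Finset.prod_nonneg fun i _ ↦ gaussianPDFReal_nonneg 0 1 (s i)),
    stdGaussDensity_eq_prod, smul_eq_mul, mul_comm]

lemma map_dotProduct_pi_gaussianReal {ι : Type*} [Fintype ι] (u : ι → ℝ) :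
    (Measure.pi fun _ : ι ↦ gaussianReal 0 1).map (u ⬝ᵥ ·) =
      gaussianReal 0 (∑ i, u i ^ 2).toNNReal := by
  set L : StrongDual ℝ (EuclideanSpace ℝ ι) := innerSL ℝ (WithLp.toLp 2 u)
  have hL : (u ⬝ᵥ ·) = L ∘ WithLp.toLp 2 := by
    ext s
    simp [L, dotProduct, PiLp.inner_apply, mul_comm]
  rw [hL, ← Measure.map_map L.continuous.measurable (by fun_prop), map_pi_eq_stdGaussian,
    IsGaussian.map_eq_gaussianReal, integral_strongDual_stdGaussian, variance_dual_stdGaussian,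
    innerSL_apply_norm, EuclideanSpace.real_norm_sq_eq]

lemma measureReal_gaussianReal_Ici_neg (a : ℝ) :
    (gaussianReal 0 1).real (Ici (-a)) = stdGaussianCDF a := by
  rw [stdGaussianCDF, measureReal_def]
  congr 1
  conv_lhs => rw [← neg_zero, ← gaussianReal_map_neg]
  rw [Measure.map_apply measurable_neg measurableSet_Ici]
  simp

lemma hasDerivAt_gaussianPDFReal_zero_one (x : ℝ) :
    HasDerivAt (gaussianPDFReal 0 1) (-(x * gaussianPDFReal 0 1 x)) x := by
  have hφ : gaussianPDFReal 0 1 = fun x ↦ (Real.sqrt (2 * Real.pi))⁻¹ * Real.exp (-x ^ 2 / 2) :=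
    funext gaussianPDFReal_zero_one
  rw [hφ]
  exact (((hasDerivAt_pow 2 x).fun_neg.div_const 2).exp.const_mul _).congr_deriv (by ring)

lemma tendsto_gaussianPDFReal_zero_one_atTop :
    Filter.Tendsto (gaussianPDFReal 0 1) Filter.atTop (nhds 0) := by
  have hexp : Filter.Tendsto (fun x : ℝ ↦ -x ^ 2 / 2) Filter.atTop Filter.atBot :=
    (Filter.tendsto_neg_atTop_atBot.comp (Filter.tendsto_pow_atTop two_ne_zero)).atBot_div_const
      two_pos
  simpa [funext gaussianPDFReal_zero_one] using (Real.tendsto_exp_atBot.comp hexp).const_mul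
    (Real.sqrt (2 * Real.pi))⁻¹

lemma integrable_mul_gaussianPDFReal_zero_one :
    Integrable (fun x ↦ x * gaussianPDFReal 0 1 x) := by
  refine ((integrable_mul_exp_neg_mul_sq (b := 1 / 2) (by norm_num)).const_mul
    (Real.sqrt (2 * Real.pi))⁻¹).congr (ae_of_all _ fun x ↦ ?_)
  simp only [gaussianPDFReal_zero_one]
  ring_nf

lemma setIntegral_Ici_gaussianReal (a : ℝ) :
    ∫ x in Ici a, x ∂gaussianReal 0 1 = gaussianPDFReal 0 1 a := by
  rw [gaussianReal_of_var_ne_zero 0 one_ne_zero, setIntegral_withDensity_eq_setIntegral_toReal_smul'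
    _ (measurable_gaussianPDF 0 1) (ae_of_all _ fun _ ↦ gaussianPDF_lt_top)]
  simp_rw [toReal_gaussianPDF, smul_eq_mul, mul_comm (gaussianPDFReal 0 1 _),
    integral_Ici_eq_integral_Ioi]
  have hftc := integral_Ioi_of_hasDerivAt_of_tendsto (f := fun x ↦ -gaussianPDFReal 0 1 x)
    (f' := fun x ↦ x * gaussianPDFReal 0 1 x)
    (hasDerivAt_gaussianPDFReal_zero_one a).neg.continuousAt.continuousWithinAt
    (fun x _ ↦ (hasDerivAt_gaussianPDFReal_zero_one x).neg.congr_deriv (neg_neg _))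
    integrable_mul_gaussianPDFReal_zero_one.integrableOn
    tendsto_gaussianPDFReal_zero_one_atTop.neg
  rw [hftc, neg_zero, zero_sub, neg_neg]

lemma integral_mul_le_setIntegral_of_integral_eq {α : Type*} [MeasurableSpace α]
    {μ : Measure α} [IsFiniteMeasure μ] {X h : α → ℝ} (hXm : Measurable X)
    (hXi : Integrable X μ) (hh : AEStronglyMeasurable h μ) (h01 : ∀ x, h x ∈ Icc 0 1) (c : ℝ)
    (hmass : ∫ x, h x ∂μ = μ.real {x | c ≤ X x}) :
    ∫ x, h x * X x ∂μ ≤ ∫ x in {x | c ≤ X x}, X x ∂μ := by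
  set S := {x | c ≤ X x}
  have hS : MeasurableSet S := measurableSet_le measurable_const hXm
  have hbound : ∀ᵐ x ∂μ, ‖h x‖ ≤ 1 := ae_of_all _ fun x ↦ by
    rw [Real.norm_of_nonneg (h01 x).1]; exact (h01 x).2
  have hhi : Integrable h μ := .of_bound hh 1 hbound
  have hhXi : Integrable (fun x ↦ h x * X x) μ := hXi.bdd_mul hh hbound
  have hnonneg : ∀ x, 0 ≤ (S.indicator 1 x - h x) * (X x - c) := fun x ↦ by
    by_cases hx : x ∈ S
    · rw [Set.indicator_of_mem hx, Pi.one_apply]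
      exact mul_nonneg (sub_nonneg.2 (h01 x).2) (sub_nonneg.2 hx)
    · rw [Set.indicator_of_notMem hx, zero_sub, neg_mul]
      exact neg_nonneg.2 (mul_nonpos_of_nonneg_of_nonpos (h01 x).1
        (sub_nonpos.2 (le_of_lt (not_le.1 hx))))
  have hexpand : ∀ x, (S.indicator 1 x - h x) * (X x - c) =
      S.indicator X x - h x * X x - c * (S.indicator 1 x - h x) := fun x ↦ by
    by_cases hx : x ∈ S <;> simp [hx] <;> ring
  have hint : 0 ≤ ∫ x, (S.indicator 1 x - h x) * (X x - c) ∂μ := integral_nonneg hnonneg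
  simp_rw [hexpand] at hint
  have hXSi : Integrable (S.indicator X) μ := hXi.indicator hS
  have hSi : Integrable (S.indicator 1) μ := (integrable_const (1 : ℝ)).indicator hS
  rw [integral_sub (f := fun x ↦ S.indicator X x - h x * X x)
      (g := fun x ↦ c * (S.indicator 1 x - h x)) (hXSi.sub hhXi) ((hSi.sub hhi).const_mul c),
    integral_sub hXSi hhXi, integral_const_mul, integral_sub hSi hhi, integral_indicator hS,
    integral_indicator_one hS, hmass, sub_self, mul_zero, sub_zero, sub_nonneg] at hint
  exact hint

section MapEqGaussianReal

variable {α : Type*} [MeasurableSpace α] {μ : Measure α} {X : α → ℝ}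

lemma measureReal_neg_le_of_map_eq_gaussianReal (hXm : Measurable X)
    (hX : μ.map X = gaussianReal 0 1) (a : ℝ) :
    μ.real {x | -a ≤ X x} = stdGaussianCDF a := by
  rw [← measureReal_gaussianReal_Ici_neg, ← hX, map_measureReal_apply hXm measurableSet_Ici]
  rfl

lemma setIntegral_neg_le_of_map_eq_gaussianReal (hXm : Measurable X)
    (hX : μ.map X = gaussianReal 0 1) (a : ℝ) :
    ∫ x in {x | -a ≤ X x}, X x ∂μ = (Real.sqrt (2 * Real.pi))⁻¹ * Real.exp (-a ^ 2 / 2) := by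
  have := setIntegral_map (μ := μ) (f := fun x ↦ x) (s := Ici (-a)) measurableSet_Ici
    aestronglyMeasurable_id hXm.aemeasurable
  rw [hX, setIntegral_Ici_gaussianReal, gaussianPDFReal_zero_one, neg_sq] at this
  exact this.symm

lemma integral_mul_le_of_map_eq_gaussianReal [IsFiniteMeasure μ] (hXm : Measurable X)
    (hX : μ.map X = gaussianReal 0 1) {h : α → ℝ} (hh : Measurable h) (h01 : ∀ x, h x ∈ Icc 0 1)
    (a : ℝ) (hmass : ∫ x, h x ∂μ = stdGaussianCDF a) :
    ∫ x, h x * X x ∂μ ≤ (Real.sqrt (2 * Real.pi))⁻¹ * Real.exp (-a ^ 2 / 2) := by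
  have hXi : Integrable X μ := by
    have hid : Integrable id (μ.map X) := hX ▸ IsGaussian.integrable_id
    exact (integrable_map_measure aestronglyMeasurable_id hXm.aemeasurable).1 hid
  rw [← setIntegral_neg_le_of_map_eq_gaussianReal hXm hX]
  exact integral_mul_le_setIntegral_of_integral_eq hXm hXi hh.aestronglyMeasurable h01 (-a)
    (hmass.trans (measureReal_neg_le_of_map_eq_gaussianReal hXm hX a).symm)

end MapEqGaussianReal

/-- among measurable `h : ℝⁿ → [0,1]` with `E[h(s)] = p` under the
standard Gaussian, `E[h(s)·uᵀs] ≤ (1/√(2π)) exp(−Φ⁻¹(p)²/2)` for unit `u`, and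
equality is attained by the indicator `h*(s) = 1{uᵀs ≥ −Φ⁻¹(p)}`, which
satisfies the constraint. -/
theorem gaussian_indicator_maximizes_inner_expectation (n : ℕ)
    (u : Fin n → ℝ) (hu : Real.sqrt (∑ i, u i ^ 2) = 1)
    (p : ℝ) (hp : p ∈ Set.Ioo (0:ℝ) 1)
    (Φinv : ℝ → ℝ)
    (hΦinv : ∀ q ∈ Set.Ioo (0:ℝ) 1, stdGaussianCDF (Φinv q) = q) :
    (∀ h : (Fin n → ℝ) → ℝ, Measurable h → (∀ v, h v ∈ Set.Icc (0:ℝ) 1) →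
      (∫ s, h s * stdGaussDensity n s) = p →
      (∫ s, h s * (u ⬝ᵥ s) * stdGaussDensity n s) ≤
        (Real.sqrt (2 * Real.pi))⁻¹ * Real.exp (-(Φinv p) ^ 2 / 2)) ∧
    (∫ s, (if -(Φinv p) ≤ u ⬝ᵥ s then (1:ℝ) else 0) * stdGaussDensity n s) = p ∧
    (∫ s, (if -(Φinv p) ≤ u ⬝ᵥ s then (1:ℝ) else 0) * (u ⬝ᵥ s) *
        stdGaussDensity n s) =
      (Real.sqrt (2 * Real.pi))⁻¹ * Real.exp (-(Φinv p) ^ 2 / 2) := by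
  have hXm : Measurable fun s : Fin n → ℝ ↦ u ⬝ᵥ s := by fun_prop
  have hX : (Measure.pi fun _ : Fin n ↦ gaussianReal 0 1).map (u ⬝ᵥ ·) = gaussianReal 0 1 := by
    rw [map_dotProduct_pi_gaussianReal, Real.sqrt_eq_one.1 hu, Real.toNNReal_one]
  have hcdf : stdGaussianCDF (Φinv p) = p := hΦinv p hp
  set S := {s | -(Φinv p) ≤ u ⬝ᵥ s}
  have hS : MeasurableSet S := measurableSet_le measurable_const hXm
  have hite : ∀ s, (if -(Φinv p) ≤ u ⬝ᵥ s then (1:ℝ) else 0) = S.indicator 1 s := fun s ↦ by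
    simp [S, Set.indicator_apply]
  simp_rw [integral_mul_stdGaussDensity_eq_integral_pi, hite]
  refine ⟨fun h hh h01 hmass ↦ ?_, ?_, ?_⟩
  · exact integral_mul_le_of_map_eq_gaussianReal hXm hX hh h01 _ (hmass.trans hcdf.symm)
  · rw [integral_indicator_one hS, measureReal_neg_le_of_map_eq_gaussianReal hXm hX, hcdf]
  · simp_rw [← Set.indicator_mul_left, Pi.one_apply, one_mul]
    rw [integral_indicator hS, setIntegral_neg_le_of_map_eq_gaussianReal hXm hX]
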